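/- Let Φ : H → [0,+∞) be a convex differentiable function on a real Hilbert space H whose gradient is L-Lipschitz continuous for some L > 0, with C = argmin Φ = Φ^{−1}(0) nonempty and Φ(0) < +∞. Let λ > 0, μ = 1/λ with μL < 1, and assume hypotheses (H1)ε and (H2)ε: for every p in the range of N_C, ∫₀^{+∞} [μ Φ*(ε(t)p/μ) − σ_C(ε(t)p) + (1/2)‖ε(t)p‖²] dt < +∞; and ε(·) is a nonincreasing C¹ function, Lipschitz continuous on [0,+∞), with lim_{t→+∞} ε(t) = 0, ∫₀^{+∞} ε(t) dt = +∞, and −k ε² ≤ ε̇ for some k ≥ 0. Then for any strong global solution (x(·), v(·)) of v(t) = ∇Φ(x(t)), λẋ(t) + v̇(t) + v(t) + ε(t)x(t) = 0, with y(t) = x(t) + μ v(t), both x(t) and y(t) converge strongly, as t → +∞, to the element of minimal norm of C = argmin Φ. -/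

import Mathlib

noncomputable section
set_option maxHeartbeats 1000000
open MeasureTheory Filter Set
open scoped InnerProductSpace RealInnerProductSpace Topology ENNReal

variable {H : Type*} [NormedAddCommGroup H] [InnerProductSpace ℝ H] [CompleteSpace H]

/-- The subdifferential of an extended-real-valued convex function:
`∂Φ(x) = {p : Φ(y) ≥ Φ(x) + ⟨p, y - x⟩ for all y}`. -/
def subdiff (Φ : H → EReal) (x : H) : Set H :=
  {p : H | ∀ y : H, Φ x + ((⟪p, y - x⟫ : ℝ) : EReal) ≤ Φ y}

/-- A proper function: never takes the value `⊥` and is not identically `⊤`. -/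
def ProperFn (Φ : H → EReal) : Prop := (∀ x, Φ x ≠ ⊥) ∧ ∃ x, Φ x ≠ ⊤

/-- Convexity for extended-real-valued functions. -/
def EConvexOn (Φ : H → EReal) : Prop :=
  ∀ x y : H, ∀ a b : ℝ, 0 ≤ a → 0 ≤ b → a + b = 1 →
    Φ (a • x + b • y) ≤ (a : EReal) * Φ x + (b : EReal) * Φ y

/-- The Fenchel conjugate `f*(u) = sup_x (⟨x, u⟩ - f(x))`. -/
def fenchel (Φ : H → EReal) (u : H) : EReal := ⨆ x : H, ((⟪x, u⟫ : ℝ) : EReal) - Φ x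

/-- The Moreau envelope of parameter `γ`: `f_γ(x) = inf_ξ (f(ξ) + (1/(2γ))‖x - ξ‖²)`. -/
def moreau (γ : ℝ) (Φ : H → EReal) (x : H) : EReal :=
  ⨅ ξ : H, Φ ξ + (((1 / (2 * γ)) * ‖x - ξ‖ ^ 2 : ℝ) : EReal)

/-- The support function `σ_C(z) = sup_{c ∈ C} ⟨z, c⟩`. -/
def suppFn (C : Set H) (z : H) : EReal := ⨆ c ∈ C, ((⟪z, c⟫ : ℝ) : EReal)

/-- Map an extended real number to `ℝ≥0∞` (sending `⊤` to `⊤` and negatives to `0`). -/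
def eToENN (x : EReal) : ℝ≥0∞ := if x = ⊤ then ⊤ else ENNReal.ofReal x.toReal

/-- `(x, v)` is a strong global solution of the smooth regularized Newton dynamic
`v(t) = ∇Φ(x(t))`, `λ ẋ(t) + v̇(t) + v(t) + ε(t) x(t) = 0`. -/
def IsStrongSolSmooth (Φ : H → ℝ) (lam : ℝ) (ε : ℝ → ℝ) (x v : ℝ → H) : Prop :=
  ∃ x' v' : ℝ → H,
    (∀ b : ℝ, 0 < b → IntervalIntegrable x' volume 0 b ∧ IntervalIntegrable v' volume 0 b) ∧
    (∀ t : ℝ, 0 ≤ t → x t = x 0 + ∫ s in (0:ℝ)..t, x' s) ∧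
    (∀ t : ℝ, 0 ≤ t → v t = v 0 + ∫ s in (0:ℝ)..t, v' s) ∧
    (∀ t : ℝ, 0 ≤ t → v t = gradient Φ (x t)) ∧
    (∀ᵐ t ∂(volume.restrict (Set.Ici (0:ℝ))),
      lam • x' t + v' t + v t + ε t • x t = 0)

/- ### Auxiliary lemmas -/

/-- The scalar inequality at the heart of the Lyapunov estimate. -/
private lemma core_ineq (μ e fx Fr a b c nx nv np : ℝ) (hμ : 0 < μ) (he : 0 ≤ e) (heμ : e*μ ≤ 1)
    (hfx : 0 ≤ fx) (hfa : fx ≤ a) (hfen : -e*c - fx ≤ Fr) (hb : -(np*nv) ≤ b) :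
    -μ*((a + μ*nv^2) + e*(nx^2 + μ*a + c - np^2 + μ*b)) + μ*e*(1/2*(nx^2 + 2*μ*a + μ^2*nv^2))
      ≤ μ*Fr + e*μ*np^2 + 1/2*(e*μ)^2*np^2 := by
  have h1 : (-(np*nv)) * (e*μ) ≤ b * (e*μ) :=
    mul_le_mul_of_nonneg_right hb (by positivity)
  have h2 : 0 ≤ μ * (e*np - nv)^2 := by positivity
  have h3 : 0 ≤ (1 - e*μ) * (μ * nv^2) := by
    apply mul_nonneg (by linarith) (by positivity)
  have h4 : 0 ≤ μ * (e * nx^2) := by positivity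
  have h5 : μ * (-e*c - fx) ≤ μ * Fr := mul_le_mul_of_nonneg_left hfen hμ.le
  have h6 : μ * fx ≤ μ * a := mul_le_mul_of_nonneg_left hfa hμ.le
  nlinarith [mul_nonneg hμ.le hfx, mul_nonneg (mul_nonneg hμ.le he) hfx]

/-- Gradient inequality for a convex differentiable function. -/
private lemma grad_ineq (Φ : H → ℝ) (hconv : ConvexOn ℝ Set.univ Φ) (hdiff : Differentiable ℝ Φ)
    (a b : H) : Φ a + ⟪gradient Φ a, b - a⟫ ≤ Φ b := by
  have hgrad : HasFDerivAt Φ ((InnerProductSpace.toDual ℝ H) (gradient Φ a)) a :=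
    (hdiff a).hasGradientAt.hasFDerivAt
  set ψ : ℝ → ℝ := fun θ => Φ (a + θ • (b - a)) with hψdef
  have hc : HasDerivAt (fun θ : ℝ => a + θ • (b - a)) (b - a) 0 := by
    simpa using ((hasDerivAt_id (0:ℝ)).smul_const (b - a)).const_add a
  have hψd : HasDerivAt ψ ⟪gradient Φ a, b - a⟫ 0 := by
    have h0 : a + (0:ℝ) • (b - a) = a := by simp
    have := HasFDerivAt.comp_hasDerivAt (0:ℝ) (h0 ▸ hgrad) hc
    simpa [hψdef, InnerProductSpace.toDual_apply_apply, Function.comp_def] using this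
  have hψconv : ConvexOn ℝ Set.univ ψ := by
    have h := hconv.comp_affineMap (AffineMap.lineMap a b)
    have heq : ψ = Φ ∘ (AffineMap.lineMap a b) := by
      funext θ
      simp [hψdef, AffineMap.lineMap_apply, add_comm]
    rw [heq]
    simpa using h
  have hbound : ∀ θ : ℝ, θ ∈ Ioo (0:ℝ) 1 → slope ψ 0 θ ≤ ψ 1 - ψ 0 := by
    intro θ hθ
    have hcc := hψconv.2 (mem_univ (0:ℝ)) (mem_univ (1:ℝ))
      (by linarith [hθ.2] : (0:ℝ) ≤ 1 - θ) hθ.1.le (by ring)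
    have hval : (1 - θ) • (0:ℝ) + θ • (1:ℝ) = θ := by simp
    rw [hval] at hcc
    have hslope : slope ψ 0 θ = (ψ θ - ψ 0) / θ := by
      rw [slope_def_field]; ring_nf
    rw [hslope, div_le_iff₀ hθ.1]
    have hcc' : (1 - θ) • ψ 0 + θ • ψ 1 = ψ 0 + θ * (ψ 1 - ψ 0) := by
      simp only [smul_eq_mul]; ring
    rw [hcc'] at hcc
    linarith
  have hslopelim : Tendsto (slope ψ 0) (𝓝[>] 0) (𝓝 ⟪gradient Φ a, b - a⟫) :=
    (hasDerivAt_iff_tendsto_slope.1 hψd).mono_left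
      (nhdsWithin_mono _ (fun z hz => ne_of_gt hz))
  have hev : ∀ᶠ θ in 𝓝[>] (0:ℝ), slope ψ 0 θ ≤ ψ 1 - ψ 0 := by
    filter_upwards [Ioo_mem_nhdsGT_of_mem (by norm_num : (0:ℝ) ∈ Ico (0:ℝ) 1)] with θ hθ
    exact hbound θ hθ
  have hle : ⟪gradient Φ a, b - a⟫ ≤ ψ 1 - ψ 0 := le_of_tendsto hslopelim hev
  have h0 : ψ 0 = Φ a := by simp [hψdef]
  have h1 : ψ 1 = Φ b := by simp [hψdef]
  rw [h0, h1] at hle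
  linarith

private lemma lintegral_superadd {f : ℝ → ℝ≥0∞} {A B : Set ℝ} (hA : MeasurableSet A)
    (hB : MeasurableSet B) (hd : Disjoint A B) :
    (∫⁻ t in A, f t) + ∫⁻ t in B, f t ≤ ∫⁻ t in A ∪ B, f t := by
  rw [← lintegral_indicator hA, ← lintegral_indicator hB, ← lintegral_indicator (hA.union hB)]
  refine le_trans (le_lintegral_add _ _) (le_of_eq (lintegral_congr fun t => ?_))
  rw [Set.indicator_union_of_disjoint hd]

private lemma lintegral_Ioi_eq_iSup {f : ℝ → ℝ≥0∞} {a : ℝ} :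
    ∫⁻ t in Ioi a, f t = ⨆ n : ℕ, ∫⁻ t in Ioc a (a + n), f t := by
  apply le_antisymm
  · rw [← lintegral_indicator measurableSet_Ioi, MeasureTheory.lintegral]
    refine iSup₂_le fun g hg => ?_
    have hg' : ∀ t, g t ≤ (Ioi a).indicator f t := fun t => hg t
    have hg0 : ∀ t, t ∉ Ioi a → g t = 0 := by
      intro t ht
      have h2 := hg' t
      rw [Set.indicator_of_notMem ht] at h2
      exact le_antisymm h2 (zero_le)
    set gs : ℕ → ℝ → ℝ≥0∞ := fun n t => (Ioc a (a + (n:ℝ))).indicator g t with hgs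
    have hmono : Monotone gs := by
      intro m n hmn t
      simp only [hgs]
      by_cases hm : t ∈ Ioc a (a + (m:ℝ))
      · rw [Set.indicator_of_mem hm, Set.indicator_of_mem
          (Ioc_subset_Ioc_right (by linarith [(Nat.cast_le (α := ℝ)).2 hmn] : a + (m:ℝ) ≤ a + n) hm)]
      · rw [Set.indicator_of_notMem hm]; exact zero_le
    have key : ∀ t, g t = ⨆ n : ℕ, gs n t := by
      intro t
      by_cases ht : t ∈ Ioi a
      · obtain ⟨n, hn⟩ := exists_nat_ge (t - a)
        apply le_antisymm
        · refine le_trans ?_ (le_iSup (fun n => gs n t) n)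
          simp only [hgs]
          exact le_of_eq (Set.indicator_of_mem
            (show t ∈ Ioc a (a + (n:ℝ)) from ⟨ht, by linarith⟩) ⇑g).symm
        · refine iSup_le fun m => ?_
          simp only [hgs]
          by_cases hm : t ∈ Ioc a (a + (m:ℝ))
          · rw [Set.indicator_of_mem hm]
          · rw [Set.indicator_of_notMem hm]; exact zero_le
      · rw [hg0 t ht]
        apply le_antisymm (zero_le)
        refine iSup_le fun m => ?_
        simp only [hgs]
        by_cases hm : t ∈ Ioc a (a + (m:ℝ))
        · exact absurd (Ioc_subset_Ioi_self hm) ht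
        · simp [Set.indicator_of_notMem hm]
    calc g.lintegral volume = ∫⁻ t, g t := (g.lintegral_eq_lintegral volume).symm
      _ = ∫⁻ t, ⨆ n : ℕ, gs n t := lintegral_congr key
      _ = ⨆ n : ℕ, ∫⁻ t, gs n t :=
          lintegral_iSup (fun n => g.measurable.indicator measurableSet_Ioc) hmono
      _ ≤ ⨆ n : ℕ, ∫⁻ t in Ioc a (a + n), f t := by
          refine iSup_mono fun n => ?_
          rw [hgs, lintegral_indicator measurableSet_Ioc]
          exact lintegral_mono fun t => le_trans (hg' t) (Set.indicator_le_self _ _ t)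
  · exact iSup_le fun n => lintegral_mono' (Measure.restrict_mono Ioc_subset_Ioi_self le_rfl) le_rfl

private lemma lintegral_tail_tendsto {f : ℝ → ℝ≥0∞} (hfin : ∫⁻ t in Ioi (0:ℝ), f t < ⊤) :
    Tendsto (fun n : ℕ => ∫⁻ t in Ioi ((n:ℝ)), f t) atTop (𝓝 0) := by
  set total := ∫⁻ t in Ioi (0:ℝ), f t with htotal
  have hfrontne : ∀ n : ℕ, (∫⁻ t in Ioc (0:ℝ) n, f t) ≠ ⊤ := by
    intro n
    exact ne_top_of_le_ne_top hfin.ne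
      (lintegral_mono' (Measure.restrict_mono Ioc_subset_Ioi_self le_rfl) le_rfl)
  have hsplit : ∀ n : ℕ, (∫⁻ t in Ioc (0:ℝ) n, f t) + (∫⁻ t in Ioi ((n:ℝ)), f t) ≤ total := by
    intro n
    have h := lintegral_superadd (f := f) (A := Ioc (0:ℝ) n) (B := Ioi ((n:ℝ)))
      measurableSet_Ioc measurableSet_Ioi (Ioc_disjoint_Ioi le_rfl)
    rwa [Set.Ioc_union_Ioi_eq_Ioi (by positivity : (0:ℝ) ≤ n)] at h
  have hfrontsup : (⨆ n : ℕ, ∫⁻ t in Ioc (0:ℝ) n, f t) = total := by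
    rw [htotal, lintegral_Ioi_eq_iSup]
    congr 1; funext n; norm_num
  have hmono : Monotone (fun n : ℕ => ∫⁻ t in Ioc (0:ℝ) n, f t) := by
    intro m n hmn
    exact lintegral_mono' (Measure.restrict_mono
      (Ioc_subset_Ioc_right (Nat.cast_le.2 hmn)) le_rfl) le_rfl
  have hfronttend : Tendsto (fun n : ℕ => ∫⁻ t in Ioc (0:ℝ) n, f t) atTop (𝓝 total) := by
    rw [← hfrontsup]
    exact tendsto_atTop_iSup hmono
  have hbound : ∀ n : ℕ, (∫⁻ t in Ioi ((n:ℝ)), f t) ≤ total - ∫⁻ t in Ioc (0:ℝ) n, f t :=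
    fun n => ENNReal.le_sub_of_add_le_left (hfrontne n) (hsplit n)
  have htendsub : Tendsto (fun n : ℕ => total - ∫⁻ t in Ioc (0:ℝ) n, f t) atTop (𝓝 0) := by
    have h := ENNReal.Tendsto.sub (tendsto_const_nhds (x := total)) hfronttend (Or.inl hfin.ne)
    simpa using h
  exact tendsto_of_tendsto_of_tendsto_of_le_of_le tendsto_const_nhds htendsub
    (fun n => zero_le) hbound

private lemma contOn_of_primitive {E : Type*} [NormedAddCommGroup E] [NormedSpace ℝ E]
    {g g' : ℝ → E}
    (hint : ∀ b : ℝ, 0 < b → IntervalIntegrable g' volume 0 b)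
    (hrep : ∀ t : ℝ, 0 ≤ t → g t = g 0 + ∫ s in (0:ℝ)..t, g' s) :
    ContinuousOn g (Ici 0) := by
  intro t ht
  have ht0 : (0:ℝ) ≤ t := ht
  have hb : (0:ℝ) < t + 1 := by linarith
  have hcont : ContinuousOn (fun u => g 0 + ∫ s in (0:ℝ)..u, g' s) (uIcc 0 (t+1)) :=
    continuousOn_const.add
      (intervalIntegral.continuousOn_primitive_interval' (hint _ hb) left_mem_uIcc)
  have huIcc : uIcc (0:ℝ) (t+1) = Icc 0 (t+1) := uIcc_of_le hb.le
  rw [huIcc] at hcont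
  have heq : EqOn g (fun u => g 0 + ∫ s in (0:ℝ)..u, g' s) (Icc 0 (t+1)) :=
    fun u hu => hrep u hu.1
  have hcw : ContinuousWithinAt g (Icc 0 (t+1)) t :=
    (hcont.congr heq).continuousWithinAt ⟨ht0, by linarith⟩
  have hmem : Icc (0:ℝ) (t+1) ∈ 𝓝[Ici 0] t := by
    refine Filter.mem_of_superset
      (inter_mem_nhdsWithin (Ici 0) (Iio_mem_nhds (by linarith : t < t+1))) ?_
    rintro u ⟨hu0, hu1⟩
    exact ⟨hu0, le_of_lt hu1⟩
  exact hcw.mono_of_mem_nhdsWithin hmem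

/-- Strong convergence: when `Φ` is convex differentiable with
`L`-Lipschitz gradient, `μL < 1`, under `(H1)_ε` and `(H2)_ε`, both `x(t)` and
`y(t) = x(t) + μ v(t)` converge strongly to the element of minimal norm of `argmin Φ`. -/
theorem stmt14 (Φ : H → ℝ) (hconv : ConvexOn ℝ Set.univ Φ) (hdiff : Differentiable ℝ Φ)
    (hnn : ∀ x, 0 ≤ Φ x)
    (L : ℝ) (hL : 0 < L) (hlip : LipschitzWith (Real.toNNReal L) (gradient Φ))
    (C : Set H) (hC : C = {x : H | Φ x = 0}) (hCne : C.Nonempty)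
    (lam μ : ℝ) (hlam : 0 < lam) (hμ : μ = 1 / lam) (hμL : μ * L < 1)
    (ε ε' : ℝ → ℝ) (hεnn : ∀ t, 0 ≤ ε t)
    (H1 : ∀ p : H, (∃ x ∈ C, ∀ c ∈ C, ⟪p, c - x⟫ ≤ (0 : ℝ)) →
      ∫⁻ t in Set.Ioi (0:ℝ),
        eToENN ((μ : EReal) * fenchel (fun w : H => (Φ w : EReal)) (μ⁻¹ • (ε t • p))
          - suppFn C (ε t • p) + (((1 / 2) * ‖ε t • p‖ ^ 2 : ℝ) : EReal)) < ⊤)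
    (hεderiv : ∀ t ∈ Set.Ici (0:ℝ), HasDerivAt ε (ε' t) t)
    (hεC1 : ContinuousOn ε' (Set.Ici (0:ℝ)))
    (hεmono : AntitoneOn ε (Set.Ici (0:ℝ)))
    (hεlip : ∃ K : NNReal, LipschitzOnWith K ε (Set.Ici (0:ℝ)))
    (hεlim : Tendsto ε atTop (𝓝 0))
    (hεdiv : ∫⁻ t in Set.Ioi (0:ℝ), ENNReal.ofReal (ε t) = ⊤)
    (hεk : ∃ k : ℝ, 0 ≤ k ∧ ∀ t ∈ Set.Ici (0:ℝ), -k * (ε t) ^ 2 ≤ ε' t)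
    (x v : ℝ → H) (hsol : IsStrongSolSmooth Φ lam ε x v) :
    ∃ l : H, l ∈ C ∧ (∀ c ∈ C, ‖l‖ ≤ ‖c‖) ∧
      Tendsto x atTop (𝓝 l) ∧
      Tendsto (fun t : ℝ => x t + μ • v t) atTop (𝓝 l) := by
  classical
  have hμpos : 0 < μ := by rw [hμ]; positivity
  have hμlam : μ * lam = 1 := by rw [hμ]; field_simp
  -- basic properties of C and the minimal norm element
  have hΦcont : Continuous Φ := hdiff.continuous
  have hCclosed : IsClosed C := by
    rw [hC]; exact isClosed_eq hΦcont continuous_const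
  have hCconv : Convex ℝ C := by
    have h0 : C = {z : H | Φ z ≤ 0} := by
      rw [hC]; ext z
      simp only [mem_setOf_eq]
      exact ⟨fun h => h.le, fun h => le_antisymm h (hnn z)⟩
    rw [h0]
    simpa using hconv.convex_le 0
  obtain ⟨pstar, hpC, hpmin⟩ :=
    exists_norm_eq_iInf_of_complete_convex hCne hCclosed.isComplete hCconv (0 : H)
  have hproj : ∀ c ∈ C, ⟪(0:H) - pstar, c - pstar⟫ ≤ 0 :=
    (norm_eq_iInf_iff_real_inner_le_zero hCconv hpC).1 hpmin
  have hinner : ∀ c ∈ C, ‖pstar‖^2 ≤ ⟪pstar, c⟫ := by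
    intro c hc
    have h1 := hproj c hc
    rw [zero_sub, inner_neg_left, neg_nonpos] at h1
    rw [inner_sub_right, real_inner_self_eq_norm_sq] at h1
    linarith
  have hmin : ∀ c ∈ C, ‖pstar‖ ≤ ‖c‖ := by
    intro c hc
    have h1 := hinner c hc
    have h2 := real_inner_le_norm pstar c
    nlinarith [norm_nonneg pstar, norm_nonneg c]
  have hΦp : Φ pstar = 0 := by rw [hC] at hpC; exact hpC
  have hgrad : ∀ a b : H, Φ a + ⟪gradient Φ a, b - a⟫ ≤ Φ b := grad_ineq Φ hconv hdiff
  -- unpack the solution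
  obtain ⟨x', v', hint, hxrep, hvrep, hvgrad, hode⟩ := hsol
  have hxcont : ContinuousOn x (Ici 0) := contOn_of_primitive (fun b hb => (hint b hb).1) hxrep
  have hvcont : ContinuousOn v (Ici 0) := contOn_of_primitive (fun b hb => (hint b hb).2) hvrep
  have hεcontAt : ∀ t : ℝ, 0 ≤ t → ContinuousAt ε t := fun t ht => (hεderiv t ht).continuousAt
  have hεcont : ContinuousOn ε (Ici 0) := fun t ht => (hεcontAt t ht).continuousWithinAt
  set w : ℝ → H := fun t => (-μ) • (v t + ε t • x t) with hwdef
  set yfun : ℝ → H := fun t => x t + μ • v t with hydef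
  have hwcont : ContinuousOn w (Ici 0) :=
    continuousOn_const.smul (hvcont.add (hεcont.smul hxcont))
  have hycont : ContinuousOn yfun (Ici 0) := hxcont.add (continuousOn_const.smul hvcont)
  -- integral representation of y
  have hode' : ∀ᵐ s ∂(volume.restrict (Ici (0:ℝ))), x' s + μ • v' s = w s := by
    filter_upwards [hode] with s hs
    have h2 : lam • x' s + v' s = -(v s + ε s • x s) := by
      rw [← add_eq_zero_iff_eq_neg, ← add_assoc]
      exact hs
    calc x' s + μ • v' s = μ • (lam • x' s + v' s) := by
          rw [smul_add, smul_smul, hμlam, one_smul]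
      _ = w s := by
          rw [h2]
          show μ • -(v s + ε s • x s) = -μ • (v s + ε s • x s)
          rw [smul_neg, neg_smul]
  have hyrep : ∀ t : ℝ, 0 ≤ t → yfun t = yfun 0 + ∫ s in (0:ℝ)..t, w s := by
    intro t ht
    rcases eq_or_lt_of_le ht with h|htpos
    · rw [← h]; simp
    have hxi := (hint t htpos).1
    have hvi := (hint t htpos).2
    have h1 : yfun t = yfun 0 + ((∫ s in (0:ℝ)..t, x' s) + μ • ∫ s in (0:ℝ)..t, v' s) := by
      show x t + μ • v t = x 0 + μ • v 0 + _
      rw [hxrep t ht, hvrep t ht, smul_add]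
      abel
    rw [h1]
    congr 1
    have hvi2 : IntervalIntegrable (fun s => μ • v' s) volume 0 t := hvi.smul μ
    rw [← intervalIntegral.integral_smul, ← intervalIntegral.integral_add hxi hvi2]
    apply intervalIntegral.integral_congr_ae
    have h3 := (ae_restrict_iff' measurableSet_Ici).1 hode'
    filter_upwards [h3] with s hsi hs
    apply hsi
    rw [uIoc_of_le ht] at hs
    exact le_of_lt hs.1
  -- differentiability of y
  have hyderiv : ∀ t : ℝ, 0 < t → HasDerivAt yfun (w t) t := by
    intro t ht
    have hIci : Ici (0:ℝ) ∈ 𝓝 t := Ici_mem_nhds ht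
    have hwc : ContinuousAt w t := hwcont.continuousAt hIci
    have hmeas : StronglyMeasurableAtFilter w (𝓝 t) :=
      ⟨Ici 0, hIci, hwcont.aestronglyMeasurable measurableSet_Ici⟩
    have hii : IntervalIntegrable w volume 0 t :=
      (hwcont.mono (by rw [uIcc_of_le ht.le]; exact Icc_subset_Ici_self)).intervalIntegrable
    have hD := (intervalIntegral.integral_hasDerivAt_right hii hmeas hwc).const_add (yfun 0)
    refine hD.congr_of_eventuallyEq ?_
    filter_upwards [hIci] with u hu
    exact hyrep u hu
  -- the primitive of ε
  set A : ℝ → ℝ := fun t => ∫ s in (0:ℝ)..t, ε s with hAdef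
  have hεii : ∀ b : ℝ, 0 ≤ b → IntervalIntegrable ε volume 0 b := by
    intro b hb
    rcases eq_or_lt_of_le hb with h|hbpos
    · rw [← h]
    · exact (hεcont.mono (by rw [uIcc_of_le hbpos.le]; exact Icc_subset_Ici_self)).intervalIntegrable
  have hArep : ∀ t : ℝ, 0 ≤ t → A t = A 0 + ∫ s in (0:ℝ)..t, ε s := by
    intro t ht; simp [hAdef]
  have hAcont : ContinuousOn A (Ici 0) :=
    contOn_of_primitive (fun b hb => hεii b hb.le) hArep
  have hAderiv : ∀ t : ℝ, 0 < t → HasDerivAt A (ε t) t := by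
    intro t ht
    have hIci : Ici (0:ℝ) ∈ 𝓝 t := Ici_mem_nhds ht
    exact intervalIntegral.integral_hasDerivAt_right (hεii t ht.le)
      ⟨Ici 0, hIci, hεcont.aestronglyMeasurable measurableSet_Ici⟩ (hεcontAt t ht.le)
  have hAmono : ∀ s t : ℝ, 0 ≤ s → s ≤ t → A s ≤ A t := by
    intro s t hs hst
    have h1 : A t - A s = ∫ u in s..t, ε u :=
      intervalIntegral.integral_interval_sub_left (hεii t (le_trans hs hst)) (hεii s hs)
    have h2 : 0 ≤ ∫ u in s..t, ε u :=
      intervalIntegral.integral_nonneg hst (fun u _ => hεnn u)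
    linarith
  -- A tends to infinity
  have hIntOn : ∀ b : ℝ, 0 ≤ b → IntegrableOn ε (Ioc (0:ℝ) b) := by
    intro b hb
    exact ((hεcont.mono (Icc_subset_Ici_self)).integrableOn_Icc).mono_set Ioc_subset_Icc_self
  have hAkey : ∀ M : ℝ, ∃ n : ℕ, M ≤ A n := by
    intro M
    by_contra hcon
    push_neg at hcon
    have hbound : (∫⁻ t in Ioi (0:ℝ), ENNReal.ofReal (ε t)) ≤ ENNReal.ofReal M := by
      rw [lintegral_Ioi_eq_iSup (f := fun t => ENNReal.ofReal (ε t)) (a := 0)]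
      refine iSup_le fun n => ?_
      have h1 : (∫⁻ t in Ioc (0:ℝ) ((0:ℝ) + n), ENNReal.ofReal (ε t))
          = ENNReal.ofReal (∫ t in Ioc (0:ℝ) ((0:ℝ)+n), ε t) :=
        (ofReal_integral_eq_lintegral_ofReal
          (by rw [zero_add]; exact hIntOn n (by positivity)) (ae_of_all _ fun t => hεnn t)).symm
      rw [h1]
      apply ENNReal.ofReal_le_ofReal
      have h2 : ∫ t in Ioc (0:ℝ) ((0:ℝ)+n), ε t = A n := by
        rw [hAdef]
        simp only [zero_add]
        rw [intervalIntegral.integral_of_le (by positivity : (0:ℝ) ≤ (n:ℝ))]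
      rw [h2]
      exact (hcon n).le
    rw [hεdiv] at hbound
    exact ENNReal.ofReal_ne_top (top_le_iff.1 hbound)
  have hAtop : Tendsto A atTop atTop := by
    rw [tendsto_atTop]
    intro M
    obtain ⟨n, hn⟩ := hAkey M
    rw [eventually_atTop]
    exact ⟨(n:ℝ), fun t htn => le_trans hn (hAmono n t (by positivity) htn)⟩
  -- instantiate H1
  set p : H := (-μ) • pstar with hpdef
  have hpcone : ∃ q ∈ C, ∀ c ∈ C, ⟪p, c - q⟫ ≤ (0:ℝ) := by
    refine ⟨pstar, hpC, fun c hc => ?_⟩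
    rw [hpdef, real_inner_smul_left]
    have h1 : 0 ≤ ⟪pstar, c - pstar⟫ := by
      rw [inner_sub_right, real_inner_self_eq_norm_sq]
      linarith [hinner c hc]
    nlinarith [hμpos.le]
  set f1 : ℝ → ℝ≥0∞ := fun t =>
    eToENN ((μ : EReal) * fenchel (fun w : H => (Φ w : EReal)) (μ⁻¹ • (ε t • p))
      - suppFn C (ε t • p) + (((1 / 2) * ‖ε t • p‖ ^ 2 : ℝ) : EReal)) with hf1def
  have hH1' : (∫⁻ t in Ioi (0:ℝ), f1 t) < ⊤ := H1 p hpcone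
  have hTail : Tendsto (fun n : ℕ => ∫⁻ t in Ioi ((n:ℝ)), f1 t) atTop (𝓝 0) :=
    lintegral_tail_tendsto hH1'
  have hTailne : ∀ s : ℝ, 0 ≤ s → (∫⁻ t in Ioi s, f1 t) ≠ ⊤ := fun s hs =>
    ne_top_of_le_ne_top hH1'.ne
      (lintegral_mono' (Measure.restrict_mono (Ioi_subset_Ioi hs) le_rfl) le_rfl)
  -- algebraic identities for the H1 integrand
  have hz1 : ∀ u : ℝ, μ⁻¹ • (ε u • p) = (-(ε u)) • pstar := by
    intro u
    rw [hpdef, smul_smul, smul_smul]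
    congr 1
    field_simp
  have hz2 : ∀ u : ℝ, ε u • p = (-(ε u * μ)) • pstar := by
    intro u; rw [hpdef, smul_smul]; congr 1; ring
  have hnormz : ∀ u : ℝ, ‖ε u • p‖^2 = (ε u * μ)^2 * ‖pstar‖^2 := by
    intro u
    rw [hz2 u, norm_smul, mul_pow, Real.norm_eq_abs, sq_abs]
    ring
  have hsupp : ∀ r : ℝ, 0 ≤ r →
      suppFn C ((-r) • pstar) = (((-(r * ‖pstar‖^2)) : ℝ) : EReal) := by
    intro r hr
    apply le_antisymm
    · simp only [suppFn]
      refine iSup₂_le fun c hc => ?_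
      rw [EReal.coe_le_coe_iff, real_inner_smul_left]
      nlinarith [hinner c hc]
    · simp only [suppFn]
      refine le_trans (le_of_eq ?_)
        (le_iSup₂ (f := fun c (_ : c ∈ C) => ((⟪(-r) • pstar, c⟫ : ℝ) : EReal)) pstar hpC)
      rw [real_inner_smul_left, real_inner_self_eq_norm_sq]
      exact congrArg _ (by ring)
  have hFenge : ∀ (z : H) (a : H),
      ((⟪a, z⟫ - Φ a : ℝ) : EReal) ≤ fenchel (fun w : H => (Φ w : EReal)) z := by
    intro z a
    rw [EReal.coe_sub]
    exact le_iSup (fun x : H => ((⟪x, z⟫ : ℝ) : EReal) - ((Φ x : ℝ) : EReal)) a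
  -- the threshold time T₁
  have hevsmall : ∀ᶠ u in (atTop : Filter ℝ), ε u * μ ≤ 1 := by
    have h2 : ∀ᶠ u in (atTop : Filter ℝ), ε u < 1/μ :=
      hεlim.eventually_lt_const (by positivity)
    filter_upwards [h2] with u hu
    rw [← le_div_iff₀ hμpos]
    exact hu.le
  obtain ⟨T₀, hT₀⟩ := eventually_atTop.1 hevsmall
  set T₁ : ℝ := max T₀ 1 with hT₁def
  have hT₁pos : (0:ℝ) < T₁ := lt_of_lt_of_le one_pos (le_max_right _ _)
  have hT₁small : ∀ u : ℝ, T₁ ≤ u → ε u * μ ≤ 1 := fun u hu =>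
    hT₀ u (le_trans (le_max_left _ _) hu)
  -- the Lyapunov function
  set φ : ℝ → ℝ := fun t => 1/2 * ‖yfun t - pstar‖^2 with hφdef
  have hφnn : ∀ t, 0 ≤ φ t := fun t => by rw [hφdef]; positivity
  have hφderiv : ∀ t : ℝ, 0 < t → HasDerivAt φ (⟪w t, yfun t - pstar⟫) t := by
    intro t ht
    have h1 : HasDerivAt (fun u => yfun u - pstar) (w t) t := (hyderiv t ht).sub_const pstar
    have h2 := HasDerivAt.inner (𝕜 := ℝ) h1 h1
    have h3 := h2.const_mul (1/2 : ℝ)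
    have heq : (fun u => 1/2 * ⟪yfun u - pstar, yfun u - pstar⟫) = φ := by
      funext u; rw [hφdef]; simp only []; rw [real_inner_self_eq_norm_sq]
    rw [heq] at h3
    refine h3.congr_deriv ?_
    rw [real_inner_comm]
    ring
  have hφcont : ContinuousOn φ (Ici 0) :=
    continuousOn_const.mul (((hycont.sub continuousOn_const).norm).pow 2)
  set Dψ : ℝ → ℝ := fun t => ⟪w t, yfun t - pstar⟫ * Real.exp (μ * A t)
      + φ t * (Real.exp (μ * A t) * (μ * ε t)) with hDψdef
  set ψ : ℝ → ℝ := fun t => φ t * Real.exp (μ * A t) with hψdef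
  have hψderiv : ∀ t : ℝ, 0 < t → HasDerivAt ψ (Dψ t) t := by
    intro t ht
    have hE : HasDerivAt (fun u => Real.exp (μ * A u)) (Real.exp (μ * A t) * (μ * ε t)) t :=
      ((hAderiv t ht).const_mul μ).exp
    exact (hφderiv t ht).mul hE
  have hDψcont : ContinuousOn Dψ (Ici 0) := by
    have hexpc : ContinuousOn (fun t => Real.exp (μ * A t)) (Ici (0:ℝ)) :=
      Real.continuous_exp.comp_continuousOn (continuousOn_const.mul hAcont)
    exact ((hwcont.inner (hycont.sub continuousOn_const)).mul hexpc).add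
      (hφcont.mul (hexpc.mul (continuousOn_const.mul hεcont)))
  -- the key pointwise estimate
  have hKey : ∀ t : ℝ, ∀ u : ℝ, T₁ ≤ u → u ≤ t →
      ENNReal.ofReal (Dψ u) ≤ ENNReal.ofReal (Real.exp (μ * A t)) * f1 u := by
    intro t u hu hut
    have hupos : 0 < u := lt_of_lt_of_le hT₁pos hu
    have hu0 : 0 ≤ u := hupos.le
    have heμ : ε u * μ ≤ 1 := hT₁small u hu
    have heu : 0 ≤ ε u := hεnn u
    set F := fenchel (fun w : H => (Φ w : EReal)) ((-(ε u)) • pstar) with hFdef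
    have hFlb : ∀ a : H, ((-(ε u) * ⟪pstar, a⟫ - Φ a : ℝ) : EReal) ≤ F := by
      intro a
      have h2 := hFenge ((-(ε u)) • pstar) a
      rw [real_inner_smul_right, real_inner_comm] at h2
      exact h2
    have hIexpr : (μ : EReal) * fenchel (fun w : H => (Φ w : EReal)) (μ⁻¹ • (ε u • p))
        - suppFn C (ε u • p) + (((1 / 2) * ‖ε u • p‖ ^ 2 : ℝ) : EReal)
        = (μ : EReal) * F
          + (((ε u * μ) * ‖pstar‖^2 + 1/2 * ((ε u * μ)^2 * ‖pstar‖^2) : ℝ) : EReal) := by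
      rw [hz1 u, hnormz u, hz2 u, hsupp (ε u * μ) (by positivity), ← hFdef]
      rw [sub_eq_add_neg, ← EReal.coe_neg, add_assoc, ← EReal.coe_add]
      congr 2
      ring
    rcases eq_or_ne F ⊤ with hFtop | hFne
    · have hf1top : f1 u = ⊤ := by
        rw [hf1def]
        simp only []
        rw [hIexpr, hFtop, EReal.mul_top_of_pos (by exact_mod_cast hμpos), EReal.top_add_coe]
        rw [eToENN]
        simp
      rw [hf1top, ENNReal.mul_top (ENNReal.ofReal_pos.2 (Real.exp_pos _)).ne']
      exact le_top
    · have hFnb : F ≠ ⊥ := by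
        intro hbot
        have h2 := hFlb pstar
        rw [hbot, le_bot_iff] at h2
        exact EReal.coe_ne_bot _ h2
      have hFr : ((F.toReal : ℝ) : EReal) = F := EReal.coe_toReal hFne hFnb
      set Fr : ℝ := F.toReal with hFrdef
      have hFrlb : ∀ a : H, -(ε u) * ⟪pstar, a⟫ - Φ a ≤ Fr := by
        intro a
        have h2 := hFlb a
        rw [← hFr] at h2
        exact_mod_cast h2
      set r : ℝ := μ * Fr + (ε u * μ) * ‖pstar‖^2 + 1/2 * ((ε u * μ)^2) * ‖pstar‖^2 with hrdef
      have hf1u : f1 u = ENNReal.ofReal r := by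
        rw [hf1def]
        simp only []
        rw [hIexpr, ← hFr, ← EReal.coe_mul, ← EReal.coe_add]
        rw [eToENN, if_neg (EReal.coe_ne_top _), EReal.toReal_coe]
        congr 1
        rw [hrdef]; ring
      have hrnn : 0 ≤ r := by
        have h2 := hFrlb pstar
        rw [real_inner_self_eq_norm_sq, hΦp] at h2
        rw [hrdef]
        nlinarith [sq_nonneg ‖pstar‖, hμpos.le, sq_nonneg (ε u * μ * ‖pstar‖)]
      -- the central inequality : Dψ u ≤ exp (μ A t) * r
      have hvu : v u = gradient Φ (x u) := hvgrad u hu0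
      have hgi : Φ (x u) + ⟪v u, pstar - x u⟫ ≤ 0 := by
        have h2 := hgrad (x u) pstar
        rw [← hvu, hΦp] at h2
        exact h2
      have hYP : yfun u - pstar = (x u - pstar) + μ • v u := by
        show x u + μ • v u - pstar = _
        abel
      have ha' : ⟪x u - pstar, v u⟫ = ⟪v u, x u - pstar⟫ := real_inner_comm _ _
      have hXXP : ⟪x u, x u - pstar⟫ = ‖x u - pstar‖^2 + (⟪pstar, x u⟫ - ‖pstar‖^2) := by
        have hX : ⟪x u, x u - pstar⟫ = ⟪(x u - pstar) + pstar, x u - pstar⟫ := by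
          rw [sub_add_cancel]
        rw [hX, inner_add_left, real_inner_self_eq_norm_sq, inner_sub_right,
          real_inner_self_eq_norm_sq]
      have hXV : ⟪x u, v u⟫ = ⟪v u, x u - pstar⟫ + ⟪pstar, v u⟫ := by
        have hX : ⟪x u, v u⟫ = ⟪(x u - pstar) + pstar, v u⟫ := by
          rw [sub_add_cancel]
        rw [hX, inner_add_left, ha']
      have e1 : ⟪w u, yfun u - pstar⟫
          = -μ * ((⟪v u, x u - pstar⟫ + μ * ‖v u‖^2)
            + ε u * (‖x u - pstar‖^2 + μ * ⟪v u, x u - pstar⟫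
              + ⟪pstar, x u⟫ - ‖pstar‖^2 + μ * ⟪pstar, v u⟫)) := by
        show ⟪(-μ) • (v u + ε u • x u), yfun u - pstar⟫ = _
        rw [hYP, real_inner_smul_left, inner_add_left, inner_add_right,
          real_inner_smul_right, real_inner_self_eq_norm_sq, real_inner_smul_left,
          inner_add_right, real_inner_smul_right, hXXP, hXV]
        ring
      have e2 : φ u = 1/2 * (‖x u - pstar‖^2 + 2*μ*⟪v u, x u - pstar⟫ + μ^2*‖v u‖^2) := by
        rw [hφdef]
        simp only []
        rw [hYP, norm_add_sq_real, real_inner_smul_right, ha', norm_smul,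
          Real.norm_eq_abs, mul_pow, sq_abs]
        ring
      have hcs : -(‖pstar‖ * ‖v u‖) ≤ ⟪pstar, v u⟫ := by
        have h2 := abs_real_inner_le_norm pstar (v u)
        have h3 := neg_abs_le (⟪pstar, v u⟫)
        linarith
      have hfa : Φ (x u) ≤ ⟪v u, x u - pstar⟫ := by
        have h2 : ⟪v u, pstar - x u⟫ = -⟪v u, x u - pstar⟫ := by
          rw [show pstar - x u = -(x u - pstar) by abel, inner_neg_right]
        linarith [hgi]
      have hfen' : -(ε u) * ⟪pstar, x u⟫ - Φ (x u) ≤ Fr := hFrlb (x u)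
      have hcore0 := core_ineq μ (ε u) (Φ (x u)) Fr ⟪v u, x u - pstar⟫ ⟪pstar, v u⟫
        ⟪pstar, x u⟫ ‖x u - pstar‖ ‖v u‖ ‖pstar‖ hμpos heu heμ (hnn (x u)) hfa
        (by linarith [hfen'] : -(ε u)*⟪pstar, x u⟫ - Φ (x u) ≤ Fr) hcs
      have hGle : ⟪w u, yfun u - pstar⟫ + μ * ε u * φ u ≤ r := by
        rw [e1, e2, hrdef]
        nlinarith [hcore0]
      have hexple : Real.exp (μ * A u) ≤ Real.exp (μ * A t) :=
        Real.exp_le_exp.2 (mul_le_mul_of_nonneg_left (hAmono u t hu0 hut) hμpos.le)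
      have hcore : Dψ u ≤ Real.exp (μ * A t) * r := by
        have hG : Dψ u = Real.exp (μ * A u) * (⟪w u, yfun u - pstar⟫ + μ * ε u * φ u) := by
          rw [hDψdef]; ring
        rw [hG]
        nlinarith [mul_le_mul_of_nonneg_left hGle (Real.exp_nonneg (μ * A u)),
          mul_le_mul_of_nonneg_right hexple hrnn]
      calc ENNReal.ofReal (Dψ u) ≤ ENNReal.ofReal (Real.exp (μ * A t) * r) :=
            ENNReal.ofReal_le_ofReal hcore
        _ = ENNReal.ofReal (Real.exp (μ * A t)) * ENNReal.ofReal r :=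
            ENNReal.ofReal_mul (Real.exp_nonneg _)
        _ = ENNReal.ofReal (Real.exp (μ * A t)) * f1 u := by rw [hf1u]
  -- the Gronwall-type estimate
  have hGron : ∀ s t : ℝ, T₁ ≤ s → s ≤ t →
      φ t ≤ φ s * Real.exp (μ * A s - μ * A t) + (∫⁻ u in Ioi s, f1 u).toReal := by
    intro s t hs hst
    have hspos : 0 < s := lt_of_lt_of_le hT₁pos hs
    have hIccIci : Icc s t ⊆ Ici (0:ℝ) := fun u hu => le_trans hspos.le hu.1
    have hftc : ∫ u in s..t, Dψ u = ψ t - ψ s := by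
      apply intervalIntegral.integral_eq_sub_of_hasDerivAt
      · intro u hu
        rw [uIcc_of_le hst] at hu
        exact hψderiv u (lt_of_lt_of_le hspos hu.1)
      · apply ContinuousOn.intervalIntegrable
        apply hDψcont.mono
        rw [uIcc_of_le hst]
        exact hIccIci
    have hDcont : ContinuousOn Dψ (Icc s t) := hDψcont.mono hIccIci
    have hMcont : ContinuousOn (fun u => max (Dψ u) 0) (Icc s t) :=
      fun u hu => (hDcont u hu).max continuousWithinAt_const
    have hDint : IntervalIntegrable Dψ volume s t := by
      apply ContinuousOn.intervalIntegrable
      rw [uIcc_of_le hst]; exact hDcont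
    have hMint : IntervalIntegrable (fun u => max (Dψ u) 0) volume s t := by
      apply ContinuousOn.intervalIntegrable
      rw [uIcc_of_le hst]; exact hMcont
    have hmax : ∫ u in s..t, Dψ u ≤ ∫ u in s..t, max (Dψ u) 0 :=
      intervalIntegral.integral_mono_on hst hDint hMint (fun u _ => le_max_left _ _)
    have hIntM : IntegrableOn (fun u => max (Dψ u) 0) (Ioc s t) :=
      (hMcont.integrableOn_Icc).mono_set Ioc_subset_Icc_self
    have hofReal : ENNReal.ofReal (∫ u in s..t, max (Dψ u) 0)
        = ∫⁻ u in Ioc s t, ENNReal.ofReal (max (Dψ u) 0) := by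
      rw [intervalIntegral.integral_of_le hst]
      exact ofReal_integral_eq_lintegral_ofReal hIntM (ae_of_all _ fun u => le_max_right _ _)
    have hlint : (∫⁻ u in Ioc s t, ENNReal.ofReal (max (Dψ u) 0))
        ≤ ENNReal.ofReal (Real.exp (μ * A t)) * ∫⁻ u in Ioi s, f1 u := by
      have hptwise : ∀ u, (Ioc s t).indicator (fun u => ENNReal.ofReal (max (Dψ u) 0)) u
          ≤ (Ioc s t).indicator (fun u => ENNReal.ofReal (Real.exp (μ * A t)) * f1 u) u := by
        intro u
        by_cases hu : u ∈ Ioc s t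
        · rw [Set.indicator_of_mem hu, Set.indicator_of_mem hu]
          have h2 : ENNReal.ofReal (max (Dψ u) 0) = ENNReal.ofReal (Dψ u) := by
            rcases le_total (Dψ u) 0 with h|h
            · rw [max_eq_right h, ENNReal.ofReal_zero, ENNReal.ofReal_of_nonpos h]
            · rw [max_eq_left h]
          rw [h2]
          exact hKey t u (le_trans hs hu.1.le) hu.2
        · rw [Set.indicator_of_notMem hu, Set.indicator_of_notMem hu]
      calc (∫⁻ u in Ioc s t, ENNReal.ofReal (max (Dψ u) 0))
          = ∫⁻ u, (Ioc s t).indicator (fun u => ENNReal.ofReal (max (Dψ u) 0)) u :=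
            (lintegral_indicator measurableSet_Ioc _).symm
        _ ≤ ∫⁻ u, (Ioc s t).indicator (fun u => ENNReal.ofReal (Real.exp (μ * A t)) * f1 u) u :=
            lintegral_mono hptwise
        _ = ∫⁻ u in Ioc s t, ENNReal.ofReal (Real.exp (μ * A t)) * f1 u :=
            lintegral_indicator measurableSet_Ioc _
        _ ≤ ∫⁻ u in Ioi s, ENNReal.ofReal (Real.exp (μ * A t)) * f1 u :=
            lintegral_mono' (Measure.restrict_mono Ioc_subset_Ioi_self le_rfl) le_rfl
        _ = ENNReal.ofReal (Real.exp (μ * A t)) * ∫⁻ u in Ioi s, f1 u :=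
            lintegral_const_mul' _ _ ENNReal.ofReal_ne_top
    have hTne : (∫⁻ u in Ioi s, f1 u) ≠ ⊤ := hTailne s hspos.le
    have h5 : ψ t - ψ s ≤ Real.exp (μ * A t) * (∫⁻ u in Ioi s, f1 u).toReal := by
      have h6 : ψ t - ψ s ≤ ∫ u in s..t, max (Dψ u) 0 := by rw [← hftc]; exact hmax
      have h7 : (0:ℝ) ≤ ∫ u in s..t, max (Dψ u) 0 :=
        intervalIntegral.integral_nonneg hst (fun u _ => le_max_right _ _)
      have h8 : ∫ u in s..t, max (Dψ u) 0
          = (∫⁻ u in Ioc s t, ENNReal.ofReal (max (Dψ u) 0)).toReal := by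
        rw [← hofReal, ENNReal.toReal_ofReal h7]
      rw [h8] at h6
      refine le_trans h6 ?_
      have h9 := ENNReal.toReal_mono (ENNReal.mul_ne_top ENNReal.ofReal_ne_top hTne) hlint
      rw [ENNReal.toReal_mul, ENNReal.toReal_ofReal (Real.exp_nonneg _)] at h9
      exact h9
    have hEt := Real.exp_pos (μ * A t)
    have h10 : φ t * Real.exp (μ * A t)
        ≤ (φ s * Real.exp (μ * A s - μ * A t) + (∫⁻ u in Ioi s, f1 u).toReal)
          * Real.exp (μ * A t) := by
      have h11 : ψ t = φ t * Real.exp (μ * A t) := rfl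
      have h12 : ψ s = φ s * Real.exp (μ * A s) := rfl
      have h13 : φ s * Real.exp (μ * A s - μ * A t) * Real.exp (μ * A t)
          = φ s * Real.exp (μ * A s) := by
        rw [Real.exp_sub]
        field_simp
      calc φ t * Real.exp (μ * A t)
          ≤ φ s * Real.exp (μ * A s) + Real.exp (μ * A t) * (∫⁻ u in Ioi s, f1 u).toReal := by
            rw [← h11, ← h12]; linarith [h5]
        _ = (φ s * Real.exp (μ * A s - μ * A t) + (∫⁻ u in Ioi s, f1 u).toReal)
            * Real.exp (μ * A t) := by rw [add_mul, h13]; ring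
    exact le_of_mul_le_mul_right h10 hEt
  -- φ tends to 0
  have hφlim : Tendsto φ atTop (𝓝 0) := by
    rw [Metric.tendsto_atTop]
    intro η hη
    rw [← eventually_atTop]
    have h1 : ∀ᶠ n : ℕ in atTop, (∫⁻ u in Ioi ((n:ℝ)), f1 u) < ENNReal.ofReal (η/2) :=
      hTail.eventually_lt_const (ENNReal.ofReal_pos.2 (by linarith))
    have h2 : ∀ᶠ n : ℕ in atTop, T₁ ≤ (n:ℝ) :=
      tendsto_natCast_atTop_atTop.eventually_ge_atTop T₁
    obtain ⟨n, hn1, hn2⟩ := (h1.and h2).exists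
    have htails : (∫⁻ u in Ioi ((n:ℝ)), f1 u).toReal < η/2 :=
      ENNReal.toReal_lt_of_lt_ofReal hn1
    have h3 : Tendsto (fun t : ℝ => φ (n:ℝ) * Real.exp (μ * A (n:ℝ) - μ * A t)) atTop (𝓝 0) := by
      have h4 : Tendsto (fun t : ℝ => μ * A t) atTop atTop :=
        Tendsto.const_mul_atTop hμpos hAtop
      have h5 : Tendsto (fun t : ℝ => μ * A (n:ℝ) - μ * A t) atTop atBot := by
        have h5' := tendsto_atBot_add_const_left atTop (μ * A (n:ℝ))
          (tendsto_neg_atTop_atBot.comp h4)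
        simpa [sub_eq_add_neg] using h5'
      have h6 := (Real.tendsto_exp_atBot).comp h5
      have h7 := h6.const_mul (φ (n:ℝ))
      simpa using h7
    have h8 : ∀ᶠ t : ℝ in atTop, φ (n:ℝ) * Real.exp (μ * A (n:ℝ) - μ * A t) < η/2 :=
      h3.eventually_lt_const (by linarith)
    filter_upwards [h8, eventually_ge_atTop ((n:ℝ))] with t ht1 ht2
    have h9 := hGron (n:ℝ) t hn2 ht2
    rw [Real.dist_eq, sub_zero, abs_of_nonneg (hφnn t)]
    linarith
  -- yfun converges to pstar
  have hnormy : Tendsto (fun t => ‖yfun t - pstar‖) atTop (𝓝 0) := by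
    have h2 : Tendsto (fun t => ‖yfun t - pstar‖^2) atTop (𝓝 0) := by
      have h2' := hφlim.const_mul (2:ℝ)
      rw [mul_zero] at h2'
      refine h2'.congr fun t => ?_
      show 2 * φ t = ‖yfun t - pstar‖^2
      have hφt : φ t = 1/2 * ‖yfun t - pstar‖^2 := rfl
      rw [hφt]; ring
    have h3 := (Real.continuous_sqrt.tendsto 0).comp h2
    rw [Real.sqrt_zero] at h3
    refine h3.congr fun t => ?_
    show Real.sqrt (‖yfun t - pstar‖^2) = ‖yfun t - pstar‖
    exact Real.sqrt_sq (norm_nonneg _)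
  have hy : Tendsto yfun atTop (𝓝 pstar) :=
    tendsto_iff_norm_sub_tendsto_zero.2 hnormy
  -- x converges to pstar
  have hxley : ∀ t : ℝ, 0 ≤ t → ‖x t - pstar‖ ≤ ‖yfun t - pstar‖ := by
    intro t ht
    have hvt := hvgrad t ht
    have hgi : Φ (x t) + ⟪v t, pstar - x t⟫ ≤ 0 := by
      have h2 := hgrad (x t) pstar
      rw [← hvt, hΦp] at h2
      exact h2
    have hfa : Φ (x t) ≤ ⟪v t, x t - pstar⟫ := by
      have h2 : ⟪v t, pstar - x t⟫ = -⟪v t, x t - pstar⟫ := by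
        rw [show pstar - x t = -(x t - pstar) by abel, inner_neg_right]
      linarith [hgi]
    have hfa2 : Φ (x t) ≤ ⟪x t - pstar, v t⟫ :=
      le_trans hfa (le_of_eq (real_inner_comm _ _))
    have hinner2 : ‖x t - pstar‖^2 ≤ ⟪x t - pstar, yfun t - pstar⟫ := by
      have hYP : yfun t - pstar = (x t - pstar) + μ • v t := by
        show x t + μ • v t - pstar = _
        abel
      rw [hYP, inner_add_right, real_inner_self_eq_norm_sq, real_inner_smul_right]
      nlinarith [hnn (x t), hfa2, hμpos.le]
    have hcs := real_inner_le_norm (x t - pstar) (yfun t - pstar)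
    nlinarith [norm_nonneg (x t - pstar), norm_nonneg (yfun t - pstar),
      sq_nonneg (‖x t - pstar‖ - ‖yfun t - pstar‖)]
  have hx : Tendsto x atTop (𝓝 pstar) := by
    rw [tendsto_iff_norm_sub_tendsto_zero]
    apply squeeze_zero' ?_ ?_ hnormy
    · filter_upwards [eventually_ge_atTop (0:ℝ)] with t ht
      exact norm_nonneg _
    · filter_upwards [eventually_ge_atTop (0:ℝ)] with t ht
      exact hxley t ht
  exact ⟨pstar, hpC, hmin, hx, hy⟩
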